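/- For every integer r with 1 ≤ r ≤ s_n, writing Δ_b(r) := (1/q) Σ_{μ ∈ F_q, μ ≠ 0} Σ_{x ∈ X^n(r)} ψ(μ · f_b(x)), one has the mean-square bound Σ_{b ∈ F_q} |Δ_b(r)|² ≤ q^{n−1} · r. -/

import Mathlib

/-- The box `X^{n+1}(r) = {0,…,s₁−1} × ⋯ × {0,…,s_n−1} × {0,…,r−1}` of exponent tuples,
where `sᵢ` is the multiplicative order of `g i` and the last coordinate is truncated
at `r`. -/
noncomputable def expBox {F : Type*} [Monoid F] {n : ℕ} (g : Fin (n + 1) → Fˣ) (r : ℕ) :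
    Finset (Fin (n + 1) → ℕ) :=
  Fintype.piFinset fun i => Finset.range (if i = Fin.last n then r else orderOf (g i))

/-- The exponential polynomial `f_b(x) = a₁g₁^{x₁} + ⋯ + a_{n+1}g_{n+1}^{x_{n+1}} − b`. -/
noncomputable def expPoly {F : Type*} [Field F] {n : ℕ} (a g : Fin (n + 1) → Fˣ) (b : F)
    (x : Fin (n + 1) → ℕ) : F :=
  (∑ i, (a i : F) * (g i : F) ^ x i) - b

/-- `S_{f_b}(r)`: the set of zeros of `f_b` in the box `X^{n+1}(r)`. -/
noncomputable def solSet {F : Type*} [Field F] [DecidableEq F] {n : ℕ} (a g : Fin (n + 1) → Fˣ)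
    (b : F) (r : ℕ) : Finset (Fin (n + 1) → ℕ) :=
  (expBox g r).filter fun x => expPoly a g b x = 0

/-- `N_{f_b}(r) = #S_{f_b}(r)`. -/
noncomputable def solCount {F : Type*} [Field F] [DecidableEq F] {n : ℕ} (a g : Fin (n + 1) → Fˣ)
    (b : F) (r : ℕ) : ℕ :=
  (solSet a g b r).card

/-- `P = ∏_{l=1}^{n} s_l`, the product of the multiplicative orders of all the `g i`
except the last one. -/
noncomputable def ordProd {F : Type*} [Monoid F] {n : ℕ} (g : Fin (n + 1) → Fˣ) : ℕ :=
  ∏ i : Fin n, orderOf (g i.castSucc)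

/-!
Expanding `|Δ_b|²` and summing over `b`, orthogonality of `ψ` gives
`Σ_b |Δ_b|² = q⁻¹ Σ_{μ ≠ 0} |S(μ)|²` with `S(μ) = Σ_{x ∈ X} ψ(μ f_0(x))`, and `S(μ)` factors into
one-variable sums `Σ_x ψ(μ aᵢ gᵢ^x)`. For `μ ≠ 0` each complete factor has square modulus at
most `q`: it is constant on the orbit of `μ aᵢ` under `⟨gᵢ⟩`, while its second moment over all
of `F` is `q sᵢ`. The truncated last factor has second moment `q r` over `μ ∈ F`, because
`x ↦ a_n g_n^x` is injective on `{0, …, r − 1}`.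
-/

open Finset ComplexConjugate

namespace AddChar

theorem map_sum_eq_prod {A M : Type*} [AddCommMonoid A] [CommMonoid M] (ψ : AddChar A M)
    {ι : Type*} (s : Finset ι) (f : ι → A) : ψ (∑ i ∈ s, f i) = ∏ i ∈ s, ψ (f i) := by
  classical
  induction s using Finset.induction_on with
  | empty => simp
  | insert i s hi ih => rw [sum_insert hi, prod_insert hi, map_add_eq_mul, ih]

variable {R : Type*} [CommRing R] [Fintype R] {ψ : AddChar R ℂ}

theorem sum_apply_mul_mul_conj_apply_mul [DecidableEq R] (hψ : ψ.IsPrimitive) (μ ν : R) :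
    ∑ b, ψ (μ * b) * conj (ψ (ν * b)) = if μ = ν then (Fintype.card R : ℂ) else 0 := by
  have (b : R) : ψ (μ * b) * conj (ψ (ν * b)) = ψ (b * (μ - ν)) := by
    rw [← map_neg_eq_conj, ← map_add_eq_mul]; ring_nf
  simp_rw [this, sum_mulShift _ hψ, sub_eq_zero]
  push_cast; rfl

theorem sum_norm_sq_sum_mul_apply_mul (hψ : ψ.IsPrimitive) (s : Finset R) (c : R → ℂ) :
    ∑ b, ‖∑ μ ∈ s, c μ * ψ (μ * b)‖ ^ 2 = Fintype.card R * ∑ μ ∈ s, ‖c μ‖ ^ 2 := by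
  classical
  apply Complex.ofReal_injective
  push_cast
  calc ∑ b, ((‖∑ μ ∈ s, c μ * ψ (μ * b)‖ : ℂ)) ^ 2
      = ∑ μ ∈ s, ∑ ν ∈ s, c μ * conj (c ν) * ∑ b, ψ (μ * b) * conj (ψ (ν * b)) := by
        simp_rw [← Complex.mul_conj', map_sum, map_mul, sum_mul_sum, mul_sum]
        rw [sum_comm]; refine sum_congr rfl fun μ _ => ?_
        rw [sum_comm]; refine sum_congr rfl fun ν _ => sum_congr rfl fun b _ => by ring
    _ = Fintype.card R * ∑ μ ∈ s, (‖c μ‖ : ℂ) ^ 2 := by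
        simp_rw [sum_apply_mul_mul_conj_apply_mul hψ, mul_ite, mul_zero]
        simp [sum_ite_eq, mul_sum, Complex.mul_conj', mul_comm]

theorem sum_norm_sq_sum_apply_mul_of_injOn (hψ : ψ.IsPrimitive) {ι : Type*} (t : Finset ι)
    {f : ι → R} (hf : Set.InjOn f t) :
    ∑ μ, ‖∑ x ∈ t, ψ (μ * f x)‖ ^ 2 = Fintype.card R * #t := by
  classical
  have (μ : R) : ∑ x ∈ t, ψ (μ * f x) = ∑ y ∈ t.image f, 1 * ψ (y * μ) := by
    rw [sum_image hf]; simp [mul_comm]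
  simp_rw [this, sum_norm_sq_sum_mul_apply_mul hψ]
  simp [card_image_of_injOn hf]

/-- `T d = Σ_{h ∈ H} ψ(d h)` is constant on the coset `c H`, so `|H| ‖T c‖²` is at most the
second moment `Σ_d ‖T d‖² = |R| |H|`. -/
theorem norm_sq_sum_subgroup_le (hψ : ψ.IsPrimitive) (H : Subgroup Rˣ) [Fintype H] {c : R}
    (hc : IsUnit c) : ‖∑ h : H, ψ (c * (h : Rˣ))‖ ^ 2 ≤ Fintype.card R := by
  classical
  set T : R → ℂ := fun d => ∑ h : H, ψ (d * (h : Rˣ))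
  have T_mul (h₀ : H) : T (c * (h₀ : Rˣ)) = T c :=
    Fintype.sum_equiv (Equiv.mulLeft h₀) _ _ fun h => by simp [mul_assoc]
  have orbit : Fintype.card H * ‖T c‖ ^ 2 ≤ ∑ d, ‖T d‖ ^ 2 :=
    calc Fintype.card H * ‖T c‖ ^ 2 = ∑ h₀ : H, ‖T (c * (h₀ : Rˣ))‖ ^ 2 := by simp [T_mul]
      _ = ∑ d ∈ univ.image fun h₀ : H => c * (h₀ : Rˣ), ‖T d‖ ^ 2 :=
        (sum_image (f := fun d => ‖T d‖ ^ 2) fun _ _ _ _ h =>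
          Subtype.ext (Units.ext (hc.mul_left_cancel h))).symm
      _ ≤ ∑ d, ‖T d‖ ^ 2 := sum_le_univ_sum_of_nonneg fun _ => by positivity
  have total : ∑ d, ‖T d‖ ^ 2 = Fintype.card R * Fintype.card H :=
    sum_norm_sq_sum_apply_mul_of_injOn hψ univ
      fun _ _ _ _ h => Subtype.ext (Units.ext h)
  have hH : (0 : ℝ) < Fintype.card H := by exact_mod_cast Fintype.card_pos
  nlinarith

theorem norm_sq_sum_range_orderOf_le (hψ : ψ.IsPrimitive) (u : Rˣ) {c : R} (hc : IsUnit c) :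
    ‖∑ k ∈ range (orderOf u), ψ (c * (u : R) ^ k)‖ ^ 2 ≤ Fintype.card R := by
  classical
  have hu : IsOfFinOrder u := isOfFinOrder_of_finite u
  rw [← Fin.sum_univ_eq_sum_range fun k => ψ (c * (u : R) ^ k),
    Fintype.sum_equiv (finEquivZPowers hu) _ (fun h => ψ (c * (h : Rˣ))) fun _ => by
      simp [finEquivZPowers_apply]]
  exact norm_sq_sum_subgroup_le hψ (Subgroup.zpowers u) hc

theorem sum_norm_sq_sum_range_mul_pow (hψ : ψ.IsPrimitive) (a u : Rˣ) {r : ℕ}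
    (hr : r ≤ orderOf u) :
    ∑ μ, ‖∑ k ∈ range r, ψ (μ * a * (u : R) ^ k)‖ ^ 2 = Fintype.card R * r := by
  have hinj : Set.InjOn (fun k => (a : R) * (u : R) ^ k) (range r) := fun k hk l hl h => by
    have hk : k < orderOf u := (mem_range.1 hk).trans_le hr
    have hl : l < orderOf u := (mem_range.1 hl).trans_le hr
    exact pow_injOn_Iio_orderOf hk hl (Units.ext (by simpa using h))
  simpa [mul_assoc] using sum_norm_sq_sum_apply_mul_of_injOn hψ (range r) hinj

end AddChar

section ExpBox

variable {F : Type*} [Field F] {n : ℕ}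

theorem sum_expBox_apply_mul_expPoly (ψ : AddChar F ℂ) (a g : Fin (n + 1) → Fˣ) (b μ : F)
    (r : ℕ) :
    ∑ x ∈ expBox g r, ψ (μ * expPoly a g b x) =
      (∏ i, ∑ k ∈ range (if i = Fin.last n then r else orderOf (g i)),
        ψ (μ * a i * (g i : F) ^ k)) * ψ (μ * -b) := by
  simp_rw [expBox, prod_univ_sum, sum_mul, expPoly, mul_sub, sub_eq_add_neg, ← mul_neg,
    AddChar.map_add_eq_mul, mul_sum, AddChar.map_sum_eq_prod, mul_assoc]

theorem norm_sq_prod_sum_range_le [Fintype F] {ψ : AddChar F ℂ} (hψ : ψ.IsPrimitive)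
    (a g : Fin (n + 1) → Fˣ) (r : ℕ) {μ : F} (hμ : μ ≠ 0) :
    ‖∏ i, ∑ k ∈ range (if i = Fin.last n then r else orderOf (g i)),
        ψ (μ * a i * (g i : F) ^ k)‖ ^ 2 ≤
      Fintype.card F ^ n *
        ‖∑ k ∈ range r, ψ (μ * a (Fin.last n) * (g (Fin.last n) : F) ^ k)‖ ^ 2 := by
  have hcomplete (i : Fin n) :
      ‖∑ k ∈ range (orderOf (g i.castSucc)), ψ (μ * a i.castSucc * (g i.castSucc : F) ^ k)‖ ^ 2
        ≤ Fintype.card F :=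
    AddChar.norm_sq_sum_range_orderOf_le hψ _ (hμ.isUnit.mul (a _).isUnit)
  rw [Fin.prod_univ_castSucc, norm_mul, mul_pow, norm_prod, ← prod_pow]
  simp only [Fin.castSucc_ne_last, if_false, if_true]
  gcongr
  calc ∏ i : Fin n, _ ≤ ∏ _i : Fin n, (Fintype.card F : ℝ) :=
        prod_le_prod (fun _ _ => by positivity) fun i _ => hcomplete i
    _ = _ := by simp

end ExpBox

theorem statement4_general (F : Type*) [Field F] [Fintype F] [DecidableEq F]
    (ψ : AddChar F ℂ) (hψ : ψ ≠ 1)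
    (n : ℕ)
    (a g : Fin (n + 1) → Fˣ)
    (r : ℕ) (hrs : r ≤ orderOf (g (Fin.last n))) :
    (∑ b : F, ‖1 / (Fintype.card F : ℂ) *
        ∑ μ ∈ Finset.univ.filter (fun μ : F => μ ≠ 0),
          ∑ x ∈ expBox g r, ψ (μ * expPoly a g b x)‖ ^ 2) ≤
      (Fintype.card F : ℝ) ^ n * (r : ℝ) := by
  have hψ' := AddChar.IsPrimitive.of_ne_one hψ
  set q : ℝ := (Fintype.card F : ℝ) with hq_def
  set P : F → ℂ := fun μ => ∏ i, ∑ k ∈ range (if i = Fin.last n then r else orderOf (g i)),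
    ψ (μ * a i * (g i : F) ^ k)
  set L : F → ℂ := fun μ => ∑ k ∈ range r, ψ (μ * a (Fin.last n) * (g (Fin.last n) : F) ^ k)
  have hq : 0 < q := Nat.cast_pos.2 Fintype.card_pos
  calc _ = (1 / q) ^ 2 * ∑ b : F, ‖∑ μ ∈ univ.filter (· ≠ 0), P μ * ψ (μ * b)‖ ^ 2 := by
        simp_rw [sum_expBox_apply_mul_expPoly, norm_mul, mul_pow, ← mul_sum]
        congr 1
        · simp [q]
        · exact Fintype.sum_equiv (Equiv.neg F) _ _ fun _ => rfl
    _ = 1 / q * ∑ μ ∈ univ.filter (· ≠ 0), ‖P μ‖ ^ 2 := by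
        rw [AddChar.sum_norm_sq_sum_mul_apply_mul hψ', ← hq_def]
        field_simp
    _ ≤ 1 / q * ∑ μ ∈ univ.filter (· ≠ 0), q ^ n * ‖L μ‖ ^ 2 := by
        gcongr with μ hμ
        exact norm_sq_prod_sum_range_le hψ' a g r (mem_filter.1 hμ).2
    _ ≤ 1 / q * ∑ μ, q ^ n * ‖L μ‖ ^ 2 := by
        gcongr
        exact subset_univ _
    _ = q ^ n * r := by
        rw [← mul_sum, AddChar.sum_norm_sq_sum_range_mul_pow hψ' _ _ hrs, ← hq_def]
        field_simp

/-- For every integer `1 ≤ r ≤ s_{n+1}`, writing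
`Δ_b(r) = (1/q) Σ_{μ ≠ 0} Σ_{x ∈ X^{n+1}(r)} ψ(μ·f_b(x))`, one has the mean-square
bound `Σ_{b ∈ F} |Δ_b(r)|² ≤ q^{(n+1)−1} · r`. -/
theorem statement4 (p ν : ℕ) (hp : p.Prime) (hν : 1 ≤ ν)
    (F : Type*) [Field F] [Fintype F] [DecidableEq F]
    (hq : Fintype.card F = p ^ ν)
    (ψ : AddChar F ℂ) (hψ : ψ ≠ 1)
    (n : ℕ) (hn : 1 ≤ n)
    (a g : Fin (n + 1) → Fˣ)
    (r : ℕ) (hr1 : 1 ≤ r) (hrs : r ≤ orderOf (g (Fin.last n))) :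
    (∑ b : F, ‖1 / (Fintype.card F : ℂ) *
        ∑ μ ∈ Finset.univ.filter (fun μ : F => μ ≠ 0),
          ∑ x ∈ expBox g r, ψ (μ * expPoly a g b x)‖ ^ 2) ≤
      (Fintype.card F : ℝ) ^ n * (r : ℝ) :=
  statement4_general F ψ hψ n a g r hrs
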